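/- arXiv:2508.04717 — 5 statements merged into one kernel-verified Lean document; each statement's English description precedes it below -/
import Mathlib

section
/- For the 3×3 matrix pencil A^α ξ_α of the 1+1 dimensional bulk-viscous Israel-Stewart system, with A⁰ and A¹ as given, the characteristic determinant factors as det[A^α ξ_α] = ρ_Π (u^α ξ_α)[(u^α ξ_α)² - c_Π² Δ^{αβ} ξ_α ξ_β], where c_Π² = P_e + ζ/(τ_Π ρ_Π) and ρ_Π = ε + P + Π. -/
/-!
Expanding along the first row, the pencil's determinant is
`a (ρ a² - (ρ P_e + ζ/τ) u₀² C²)` with `a = u^α ξ_α` and `C = ξ₁ + (u/u₀) ξ₀`.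
Since `u₀² = 1 + u²`, the spatial term is `u₀² C² = (u₀ ξ₁ + u ξ₀)² = a² - ξ₀² + ξ₁²`,
which is the projector contraction `Δ^{αβ} ξ_α ξ_β`.
-/

theorem det_bulk_pencil {K : Type*} [Field K] (a c r p s z : K) (hr : r ≠ 0) :
    !![a, r * c, 0; p * s * c, r * a, s * c; 0, z * c, a].det =
      r * a * (a ^ 2 - (p + z / r) * (s * c ^ 2)) := by
  rw [Matrix.det_fin_three]
  simp only [Matrix.of_apply, Matrix.cons_val]
  field_simp
  ring

theorem lorentz_projector_contraction {K : Type*} [Field K] (u u0 ξ0 ξ1 : K) (hu0 : u0 ≠ 0)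
    (hnorm : u0 ^ 2 = 1 + u ^ 2) :
    u0 ^ 2 * (ξ1 + u / u0 * ξ0) ^ 2 = (u0 * ξ0 + u * ξ1) ^ 2 - ξ0 ^ 2 + ξ1 ^ 2 := by
  have hboost : u0 ^ 2 * (ξ1 + u / u0 * ξ0) ^ 2 = (u0 * ξ1 + u * ξ0) ^ 2 := by
    field_simp
  rw [hboost]
  linear_combination (ξ1 ^ 2 - ξ0 ^ 2) * hnorm

theorem bulk_characteristic_determinant_general (u u0 Pe ζ tauPi rhoPi ξ0 ξ1 : ℝ)
    (hu0 : u0 = Real.sqrt (1 + u ^ 2))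
    (hρ0 : rhoPi ≠ 0) :
    Matrix.det
      !![u0 * ξ0 + u * ξ1, rhoPi * (ξ1 + (u / u0) * ξ0), 0;
         Pe * u0 ^ 2 * (ξ1 + (u / u0) * ξ0), rhoPi * (u0 * ξ0 + u * ξ1),
           u0 ^ 2 * (ξ1 + (u / u0) * ξ0);
         0, (ζ / tauPi) * (ξ1 + (u / u0) * ξ0), u0 * ξ0 + u * ξ1] =
    rhoPi * (u0 * ξ0 + u * ξ1) *
      ((u0 * ξ0 + u * ξ1) ^ 2 -
        (Pe + ζ / (tauPi * rhoPi)) * ((u0 * ξ0 + u * ξ1) ^ 2 - ξ0 ^ 2 + ξ1 ^ 2)) := by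
  have hnorm : u0 ^ 2 = 1 + u ^ 2 := by rw [hu0, Real.sq_sqrt (by positivity)]
  have hu0_ne : u0 ≠ 0 := by rw [hu0]; positivity
  rw [det_bulk_pencil _ _ _ _ _ _ hρ0, lorentz_projector_contraction u u0 ξ0 ξ1 hu0_ne hnorm,
    div_div]

/-- Characteristic determinant factorization for the 1+1 dimensional
bulk-viscous Israel–Stewart system:
`det[A^α ξ_α] = ρ_Π (u^α ξ_α)[(u^α ξ_α)² - c_Π² Δ^{αβ} ξ_α ξ_β]`,
where `c_Π² = P_e + ζ/(τ_Π ρ_PiV)` and `ρ_Π = ε + P + Π`. -/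
theorem bulk_characteristic_determinant (u u0 ε P PiV Pe ζ tauPi rhoPi ξ0 ξ1 : ℝ)
    (hu0 : u0 = Real.sqrt (1 + u ^ 2))
    (hρ : rhoPi = ε + P + PiV) (hρ0 : rhoPi ≠ 0) (hτ : tauPi ≠ 0) :
    Matrix.det
      !![u0 * ξ0 + u * ξ1, rhoPi * (ξ1 + (u / u0) * ξ0), 0;
         Pe * u0 ^ 2 * (ξ1 + (u / u0) * ξ0), rhoPi * (u0 * ξ0 + u * ξ1),
           u0 ^ 2 * (ξ1 + (u / u0) * ξ0);
         0, (ζ / tauPi) * (ξ1 + (u / u0) * ξ0), u0 * ξ0 + u * ξ1] =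
    rhoPi * (u0 * ξ0 + u * ξ1) *
      ((u0 * ξ0 + u * ξ1) ^ 2 -
        (Pe + ζ / (tauPi * rhoPi)) * ((u0 * ξ0 + u * ξ1) ^ 2 - ξ0 ^ 2 + ξ1 ^ 2)) :=
  bulk_characteristic_determinant_general u u0 Pe ζ tauPi rhoPi ξ0 ξ1 hu0 hρ0
end

section
/- Assume ρ_Π > 0, τ_Π > 0, and c_Π ∈ (0,1). Then the vector r₁ = (-1, 0, P_e)ᵀ satisfies a(ψ) r₁ = (u/u⁰) r₁ and the vectors r_± = (±ρ_Π τ_Π, u⁰ c_Π τ_Π, ±ζ)ᵀ satisfy a(ψ) r_± = λ_± r_± with λ_± = (u ± u⁰ c_Π)/(u⁰ ± u c_Π), where a(ψ) = (A⁰)⁻¹ A¹ for the bulk-viscous Israel-Stewart matrices. -/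
/-!
Both sides of `A¹ r = λ A⁰ r` are multiples of one common vector `w`: `A¹ r = n • w` and
`A⁰ r = d • w`, so `λ = n / d` as soon as `d ≠ 0`. For `r₁` one has `w = r₁`, `n = u`, `d = u⁰`.
For `r₊` the relation `ζ = (c_Π² - P_e) τ_Π ρ_Π` gives `n = u + u⁰ c_Π`, `d = u⁰ + u c_Π`, and
`d > 0` because `|u c_Π| ≤ |u| < u⁰`. The data of `r₋` are those of `r₊` with `c_Π` replaced by
`-c_Π`, up to the sign of the vector.
-/

open Matrix

lemma eq_div_smul_of_eq_smul {K M : Type*} [Field K] [AddCommGroup M] [Module K M]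
    {x y w : M} {n d : K} (hd : d ≠ 0) (hx : x = n • w) (hy : y = d • w) :
    x = (n / d) • y := by
  rw [hx, hy, smul_smul, div_mul_cancel₀ n hd]

lemma sqrt_one_add_sq_add_mul_ne_zero {u c : ℝ} (hc : |c| ≤ 1) : √(1 + u ^ 2) + u * c ≠ 0 := by
  have hlt : |u * c| < √(1 + u ^ 2) := by
    have hc2 : c ^ 2 ≤ 1 := (sq_le_one_iff_abs_le_one c).mpr hc
    rw [Real.lt_sqrt (abs_nonneg _), sq_abs, mul_pow]
    nlinarith [mul_le_mul_of_nonneg_left hc2 (sq_nonneg u)]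
  linarith [neg_abs_le (u * c)]

namespace BulkViscous

variable (u u0 ρ τ ζ Pe : ℝ)

-- `A1`, `A0` are `A^α` with `C¹ = 1`, `C⁰ = u/u⁰`; here `ρ = ρ_Π`, `τ = τ_Π`, `u0 = u⁰`.
noncomputable def A1 : Matrix (Fin 3) (Fin 3) ℝ :=
  !![u, ρ, 0; Pe * u0 ^ 2, ρ * u, u0 ^ 2; 0, ζ / τ, u]

noncomputable def A0 : Matrix (Fin 3) (Fin 3) ℝ :=
  !![u0, ρ * (u / u0), 0;
     Pe * u0 ^ 2 * (u / u0), ρ * u0, u0 ^ 2 * (u / u0);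
     0, (ζ / τ) * (u / u0), u0]

lemma A1_mulVec_contact : A1 u u0 ρ τ ζ Pe *ᵥ ![-1, 0, Pe] = u • ![-1, 0, Pe] := by
  ext i
  fin_cases i <;> simp [A1, mulVec, dotProduct, Fin.sum_univ_three]
  ring

lemma A0_mulVec_contact : A0 u u0 ρ τ ζ Pe *ᵥ ![-1, 0, Pe] = u0 • ![-1, 0, Pe] := by
  ext i
  fin_cases i <;> simp [A0, mulVec, dotProduct, Fin.sum_univ_three]
  ring

variable {u u0 ρ τ ζ Pe c : ℝ}

lemma A1_mulVec_acoustic (hτ : τ ≠ 0) (hζ : ζ = (c ^ 2 - Pe) * (τ * ρ)) :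
    A1 u u0 ρ τ ζ Pe *ᵥ ![ρ * τ, u0 * c * τ, ζ] =
      (u + u0 * c) • ![ρ * τ, u0 * c * ρ * τ, ζ] := by
  subst hζ
  ext i
  fin_cases i <;> simp [A1, mulVec, dotProduct, Fin.sum_univ_three] <;> field_simp <;> ring

lemma A0_mulVec_acoustic (hu0 : u0 ≠ 0) (hτ : τ ≠ 0) (hζ : ζ = (c ^ 2 - Pe) * (τ * ρ)) :
    A0 u u0 ρ τ ζ Pe *ᵥ ![ρ * τ, u0 * c * τ, ζ] =
      (u0 + u * c) • ![ρ * τ, u0 * c * ρ * τ, ζ] := by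
  subst hζ
  ext i
  fin_cases i <;> simp [A0, mulVec, dotProduct, Fin.sum_univ_three] <;> field_simp <;> ring

lemma A1_mulVec_contact_eq_smul_A0_mulVec (hu0 : u0 ≠ 0) :
    A1 u u0 ρ τ ζ Pe *ᵥ ![-1, 0, Pe] = (u / u0) • A0 u u0 ρ τ ζ Pe *ᵥ ![-1, 0, Pe] :=
  eq_div_smul_of_eq_smul hu0 (A1_mulVec_contact ..) (A0_mulVec_contact ..)

lemma A1_mulVec_acoustic_eq_smul_A0_mulVec (hu0 : u0 = √(1 + u ^ 2)) (hτ : τ ≠ 0)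
    (hc : |c| ≤ 1) (hζ : ζ = (c ^ 2 - Pe) * (τ * ρ)) :
    A1 u u0 ρ τ ζ Pe *ᵥ ![ρ * τ, u0 * c * τ, ζ] =
      ((u + u0 * c) / (u0 + u * c)) • A0 u u0 ρ τ ζ Pe *ᵥ ![ρ * τ, u0 * c * τ, ζ] := by
  have hu0ne : u0 ≠ 0 := hu0 ▸ (Real.sqrt_pos.mpr (by positivity)).ne'
  exact eq_div_smul_of_eq_smul (hu0 ▸ sqrt_one_add_sq_add_mul_ne_zero hc)
    (A1_mulVec_acoustic hτ hζ) (A0_mulVec_acoustic hu0ne hτ hζ)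

lemma A1_mulVec_acoustic_neg_eq_smul_A0_mulVec (hu0 : u0 = √(1 + u ^ 2)) (hτ : τ ≠ 0)
    (hc : |c| ≤ 1) (hζ : ζ = (c ^ 2 - Pe) * (τ * ρ)) :
    A1 u u0 ρ τ ζ Pe *ᵥ ![-(ρ * τ), u0 * c * τ, -ζ] =
      ((u - u0 * c) / (u0 - u * c)) • A0 u u0 ρ τ ζ Pe *ᵥ ![-(ρ * τ), u0 * c * τ, -ζ] := by
  have hflip : ![-(ρ * τ), u0 * c * τ, -ζ] = -![ρ * τ, u0 * -c * τ, ζ] := by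
    ext i; fin_cases i <;> simp
  have h := A1_mulVec_acoustic_eq_smul_A0_mulVec hu0 hτ ((abs_neg c).symm ▸ hc)
    (show ζ = ((-c) ^ 2 - Pe) * (τ * ρ) by rwa [neg_sq])
  rw [show u + u0 * -c = u - u0 * c by ring, show u0 + u * -c = u0 - u * c by ring] at h
  rw [hflip, mulVec_neg, mulVec_neg, smul_neg, h]

end BulkViscous

/-- Eigenvectors of `a(ψ) = (A⁰)⁻¹ A¹` for the bulk-viscous Israel–Stewart
system, expressed via `A¹ r = λ A⁰ r`: `r₁ = (-1, 0, P_e)ᵀ` has eigenvalue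
`u/u⁰` and `r_± = (±ρ_Π τ_Π, u⁰ c_Π τ_Π, ±ζ)ᵀ` have eigenvalues
`λ_± = (u ± u⁰ c_Π)/(u⁰ ± u c_Π)`. -/
theorem bulk_eigenvectors (u u0 rhoPi tauPi ζ Pe c : ℝ)
    (hu0 : u0 = Real.sqrt (1 + u ^ 2))
    (hρ : 0 < rhoPi) (hτ : 0 < tauPi) (hc0 : 0 < c) (hc1 : c < 1)
    (hc : c ^ 2 = Pe + ζ / (tauPi * rhoPi)) :
    (Matrix.mulVec
        !![u, rhoPi, 0; Pe * u0 ^ 2, rhoPi * u, u0 ^ 2; 0, ζ / tauPi, u]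
        ![-1, 0, Pe] =
      (u / u0) •
        Matrix.mulVec
          !![u0, rhoPi * (u / u0), 0;
             Pe * u0 ^ 2 * (u / u0), rhoPi * u0, u0 ^ 2 * (u / u0);
             0, (ζ / tauPi) * (u / u0), u0]
          ![-1, 0, Pe]) ∧
    (Matrix.mulVec
        !![u, rhoPi, 0; Pe * u0 ^ 2, rhoPi * u, u0 ^ 2; 0, ζ / tauPi, u]
        ![rhoPi * tauPi, u0 * c * tauPi, ζ] =
      ((u + u0 * c) / (u0 + u * c)) •
        Matrix.mulVec
          !![u0, rhoPi * (u / u0), 0;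
             Pe * u0 ^ 2 * (u / u0), rhoPi * u0, u0 ^ 2 * (u / u0);
             0, (ζ / tauPi) * (u / u0), u0]
          ![rhoPi * tauPi, u0 * c * tauPi, ζ]) ∧
    (Matrix.mulVec
        !![u, rhoPi, 0; Pe * u0 ^ 2, rhoPi * u, u0 ^ 2; 0, ζ / tauPi, u]
        ![-(rhoPi * tauPi), u0 * c * tauPi, -ζ] =
      ((u - u0 * c) / (u0 - u * c)) •
        Matrix.mulVec
          !![u0, rhoPi * (u / u0), 0;
             Pe * u0 ^ 2 * (u / u0), rhoPi * u0, u0 ^ 2 * (u / u0);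
             0, (ζ / tauPi) * (u / u0), u0]
          ![-(rhoPi * tauPi), u0 * c * tauPi, -ζ]) := by
  have hζ : ζ = (c ^ 2 - Pe) * (tauPi * rhoPi) := by
    field_simp at hc
    linarith
  have hcabs : |c| ≤ 1 := abs_le.mpr ⟨by linarith, hc1.le⟩
  have hu0ne : u0 ≠ 0 := hu0 ▸ (Real.sqrt_pos.mpr (by positivity)).ne'
  exact ⟨BulkViscous.A1_mulVec_contact_eq_smul_A0_mulVec hu0ne,
    BulkViscous.A1_mulVec_acoustic_eq_smul_A0_mulVec hu0 hτ.ne' hcabs hζ,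
    BulkViscous.A1_mulVec_acoustic_neg_eq_smul_A0_mulVec hu0 hτ.ne' hcabs hζ⟩
end

section
/- For the bulk-viscous Israel-Stewart system, the genuine nonlinearity coefficient satisfies r_± · ∇_ψ λ_± = (1/(u⁰ ± u c_Π)²)[τ_Π c_Π(1 - c_Π²) + τ_Π ρ_Π ∂c_Π/∂ε + ζ ∂c_Π/∂Π], where ψ = (ε, u, Π), λ_± = (u ± u⁰c_Π)/(u⁰ ± u c_Π), r_± = (±ρ_Π τ_Π, u⁰ c_Π τ_Π, ±ζ)ᵀ, and u⁰ = √(1+u²). -/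
/-!
The speed `λ_σ = (u + σ u⁰ c) / (u⁰ + σ u c)` depends on `ψ` only through `u` and
`c = c_Π(ε, Π)`, and its numerator `N` and denominator `D` satisfy `u⁰ D - u N = 1`
because `(u⁰)² - u² = 1`. This identity gives `∂λ/∂c = σ / D²` and
`∂λ/∂u = (1 - c²) / (u⁰ D²)`, so the chain rule along `r_σ` yields the formula.
Where `D` vanishes (only possible for `|c| > 1`), `N = -1/u ≠ 0` and `λ` is discontinuous,
so both sides are `0` by the junk conventions.
-/

open Real Filter Topology

theorem hasFDerivAt_uncurry_of_differentiableAt {C : ℝ → ℝ → ℝ} {a b : ℝ}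
    (hC : DifferentiableAt ℝ (fun p : ℝ × ℝ => C p.1 p.2) (a, b)) :
    HasFDerivAt (fun p : ℝ × ℝ => C p.1 p.2)
      (deriv (fun x => C x b) a • ContinuousLinearMap.fst ℝ ℝ ℝ +
        deriv (fun y => C a y) b • ContinuousLinearMap.snd ℝ ℝ ℝ) (a, b) := by
  have hfst : deriv (fun x => C x b) a =
      fderiv ℝ (fun p : ℝ × ℝ => C p.1 p.2) (a, b) (1, 0) := by
    exact (hC.hasFDerivAt.comp_hasDerivAt a
      ((hasDerivAt_id' a).prodMk (hasDerivAt_const a b))).deriv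
  have hsnd : deriv (fun y => C a y) b =
      fderiv ℝ (fun p : ℝ × ℝ => C p.1 p.2) (a, b) (0, 1) := by
    exact (hC.hasFDerivAt.comp_hasDerivAt b
      ((hasDerivAt_const b a).prodMk (hasDerivAt_id' b))).deriv
  refine hC.hasFDerivAt.congr_fderiv (ContinuousLinearMap.prod_ext ?_ ?_) <;> ext <;>
    simp [hfst, hsnd]

theorem hasDerivAt_sqrt_one_add_sq (u : ℝ) :
    HasDerivAt (fun x : ℝ => √(1 + x ^ 2)) (u / √(1 + u ^ 2)) u := by
  refine (((hasDerivAt_pow 2 u).const_add 1).sqrt (by positivity)).congr_deriv ?_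
  field_simp
  ring

noncomputable section CharSpeed

variable (σ : ℝ)

def speedNum (u c : ℝ) : ℝ := u + σ * (√(1 + u ^ 2) * c)

def speedDen (u c : ℝ) : ℝ := √(1 + u ^ 2) + σ * (u * c)

/-- With `σ = ±1` and `u⁰ = √(1 + u²)`, `charSpeed σ u c` is the paper's speed `λ_±`. -/
def charSpeed (u c : ℝ) : ℝ := speedNum σ u c / speedDen σ u c

variable {σ}

theorem sqrt_mul_speedDen_sub_mul_speedNum (u c : ℝ) :
    √(1 + u ^ 2) * speedDen σ u c - u * speedNum σ u c = 1 := by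
  have hs : √(1 + u ^ 2) ^ 2 = 1 + u ^ 2 := sq_sqrt (by positivity)
  unfold speedDen speedNum
  linear_combination hs

theorem HasFDerivAt.charSpeed {E : Type*} [NormedAddCommGroup E] [NormedSpace ℝ E]
    {f g : E → ℝ} {f' g' : E →L[ℝ] ℝ} {x : E} (hf : HasFDerivAt f f' x)
    (hg : HasFDerivAt g g' x) (hσ : σ ^ 2 = 1) (hD : speedDen σ (f x) (g x) ≠ 0) :
    HasFDerivAt (fun y => charSpeed σ (f y) (g y))
      (((1 - g x ^ 2) / (√(1 + f x ^ 2) * speedDen σ (f x) (g x) ^ 2)) • f' +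
        (σ / speedDen σ (f x) (g x) ^ 2) • g') x := by
  have hsqrt := (hasDerivAt_sqrt_one_add_sq (f x)).comp_hasFDerivAt x hf
  have hN : HasFDerivAt (fun y => speedNum σ (f y) (g y)) _ x :=
    hf.add ((hsqrt.mul hg).const_mul σ)
  have hDen : HasFDerivAt (fun y => speedDen σ (f y) (g y)) _ x :=
    hsqrt.add ((hf.mul hg).const_mul σ)
  refine (hN.mul ((hasDerivAt_inv hD).comp_hasFDerivAt x hDen)).congr_fderiv ?_
  ext v
  simp only [add_apply, smul_apply, smul_eq_mul, Function.comp_apply]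
  have hs : √(1 + f x ^ 2) ^ 2 = 1 + f x ^ 2 := sq_sqrt (by positivity)
  have hs0 : √(1 + f x ^ 2) ≠ 0 := by positivity
  unfold speedDen speedNum at *
  generalize √(1 + f x ^ 2) = s at hs hs0 hD ⊢
  field_simp
  congr 1
  linear_combination (σ * s * g' v + f' v * (1 - σ ^ 2 * g x ^ 2)) * hs - f' v * g x ^ 2 * hσ

theorem not_continuousAt_charSpeed_of_speedDen_eq_zero {u c : ℝ}
    (hD : speedDen σ u c = 0) : ¬ ContinuousAt (fun x => charSpeed σ x c) u := by
  intro hcont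
  have hN : speedNum σ u c ≠ 0 := by
    intro hN
    simpa [hD, hN] using sqrt_mul_speedDen_sub_mul_speedNum (σ := σ) u c
  have hDderiv : HasDerivAt (fun x => speedDen σ x c) (speedNum σ u c / √(1 + u ^ 2)) u := by
    have h : HasDerivAt (fun x => speedDen σ x c) (u / √(1 + u ^ 2) + σ * (1 * c)) u :=
      (hasDerivAt_sqrt_one_add_sq u).add (((hasDerivAt_id u).mul_const c).const_mul σ)
    refine h.congr_deriv ?_
    have hs0 : √(1 + u ^ 2) ≠ 0 := by positivity
    unfold speedNum
    field_simp
  have hDne : ∀ᶠ x in 𝓝[≠] u, speedDen σ x c ≠ 0 :=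
    hDderiv.eventually_ne (div_ne_zero hN (by positivity))
  have hNcont : Continuous (fun x => speedNum σ x c) := by unfold speedNum; fun_prop
  have hDcont : Continuous (fun x => speedDen σ x c) := by unfold speedDen; fun_prop
  -- off `u` the product below is `speedNum σ x c`, yet it tends to `D u * λ u = 0`
  have hprod : Tendsto (fun x => speedDen σ x c * charSpeed σ x c) (𝓝[≠] u) (𝓝 0) := by
    have := (hDcont.continuousAt.fun_mul hcont).tendsto.mono_left
      (nhdsWithin_le_nhds (s := {u}ᶜ))
    simpa only [hD, zero_mul] using this
  refine hN (tendsto_nhds_unique ((hNcont.tendsto u).mono_left nhdsWithin_le_nhds)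
    (hprod.congr' ?_))
  filter_upwards [hDne] with x hx
  simp only [charSpeed]
  field_simp

theorem fderiv_charSpeed_apply_eigenvector (hσ : σ ^ 2 = 1) {C : ℝ → ℝ → ℝ}
    {ε u PiV ρ τ ζ : ℝ}
    (hC : DifferentiableAt ℝ (fun p : ℝ × ℝ => C p.1 p.2) (ε, PiV)) :
    fderiv ℝ (fun ψ : Fin 3 → ℝ => charSpeed σ (ψ 1) (C (ψ 0) (ψ 2))) ![ε, u, PiV]
        ![σ * (ρ * τ), √(1 + u ^ 2) * C ε PiV * τ, σ * ζ] =
      1 / speedDen σ u (C ε PiV) ^ 2 * (τ * C ε PiV * (1 - C ε PiV ^ 2) +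
        τ * ρ * deriv (fun e => C e PiV) ε + ζ * deriv (fun p => C ε p) PiV) := by
  by_cases hD : speedDen σ u (C ε PiV) = 0
  · have hline : Continuous (fun x : ℝ => ![ε, x, PiV]) := by fun_prop
    have hnd : ¬ DifferentiableAt ℝ
        (fun ψ : Fin 3 → ℝ => charSpeed σ (ψ 1) (C (ψ 0) (ψ 2))) ![ε, u, PiV] :=
      fun hdiff => not_continuousAt_charSpeed_of_speedDen_eq_zero hD
        (hdiff.continuousAt.comp (f := fun x : ℝ => ![ε, x, PiV]) hline.continuousAt)
    rw [fderiv_zero_of_not_differentiableAt hnd, hD]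
    simp
  · let proj (i : Fin 3) : (Fin 3 → ℝ) →L[ℝ] ℝ := ContinuousLinearMap.proj i
    have hc := (hasFDerivAt_uncurry_of_differentiableAt hC).comp ![ε, u, PiV]
      ((proj 0).prod (proj 2)).hasFDerivAt
    have h : HasFDerivAt (fun ψ : Fin 3 → ℝ => charSpeed σ (ψ 1) (C (ψ 0) (ψ 2))) _
        ![ε, u, PiV] := (proj 1).hasFDerivAt.charSpeed hc hσ hD
    rw [h.fderiv]
    have hs0 : √(1 + u ^ 2) ≠ 0 := by positivity
    simp only [proj, ContinuousLinearMap.proj_apply, ContinuousLinearMap.comp_apply,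
      ContinuousLinearMap.prod_apply, add_apply, smul_apply, smul_eq_mul,
      ContinuousLinearMap.coe_fst', ContinuousLinearMap.coe_snd', Matrix.cons_val_zero,
      Matrix.cons_val_one, Matrix.cons_val_two, Matrix.head_cons, Matrix.tail_cons]
    field_simp
    linear_combination
      (ρ * τ * deriv (fun x => C x PiV) ε + ζ * deriv (fun y => C ε y) PiV) * hσ

end CharSpeed

theorem bulk_genuine_nonlinearity_coefficient_general
    (ε u PiV rhoPi ζ tauPi : ℝ) (cPi : ℝ → ℝ → ℝ)
    (hcdiff : DifferentiableAt ℝ (fun p : ℝ × ℝ => cPi p.1 p.2) (ε, PiV)) :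
    (fderiv ℝ
        (fun ψ : Fin 3 → ℝ =>
          (ψ 1 + Real.sqrt (1 + (ψ 1) ^ 2) * cPi (ψ 0) (ψ 2)) /
            (Real.sqrt (1 + (ψ 1) ^ 2) + ψ 1 * cPi (ψ 0) (ψ 2)))
        ![ε, u, PiV]
        ![rhoPi * tauPi, Real.sqrt (1 + u ^ 2) * cPi ε PiV * tauPi, ζ] =
      (1 / (Real.sqrt (1 + u ^ 2) + u * cPi ε PiV) ^ 2) *
        (tauPi * cPi ε PiV * (1 - (cPi ε PiV) ^ 2) +
          tauPi * rhoPi * deriv (fun e => cPi e PiV) ε +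
          ζ * deriv (fun p => cPi ε p) PiV)) ∧
    (fderiv ℝ
        (fun ψ : Fin 3 → ℝ =>
          (ψ 1 - Real.sqrt (1 + (ψ 1) ^ 2) * cPi (ψ 0) (ψ 2)) /
            (Real.sqrt (1 + (ψ 1) ^ 2) - ψ 1 * cPi (ψ 0) (ψ 2)))
        ![ε, u, PiV]
        ![-(rhoPi * tauPi), Real.sqrt (1 + u ^ 2) * cPi ε PiV * tauPi, -ζ] =
      (1 / (Real.sqrt (1 + u ^ 2) - u * cPi ε PiV) ^ 2) *
        (tauPi * cPi ε PiV * (1 - (cPi ε PiV) ^ 2) +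
          tauPi * rhoPi * deriv (fun e => cPi e PiV) ε +
          ζ * deriv (fun p => cPi ε p) PiV)) := by
  have hplus := fderiv_charSpeed_apply_eigenvector (σ := 1) (u := u) (ρ := rhoPi) (τ := tauPi)
    (ζ := ζ) (one_pow 2) hcdiff
  have hminus := fderiv_charSpeed_apply_eigenvector (σ := -1) (u := u) (ρ := rhoPi)
    (τ := tauPi) (ζ := ζ) (by norm_num) hcdiff
  simp only [charSpeed, speedNum, speedDen, one_mul, neg_one_mul, ← sub_eq_add_neg]
    at hplus hminus
  exact ⟨hplus, hminus⟩

/-- Genuine nonlinearity coefficient for the bulk-viscous Israel–Stewart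
system: with `ψ = (ε, u, PiV)`, `λ_± = (u ± u⁰ c_PiV)/(u⁰ ± u c_PiV)`,
`r_± = (±ρ_Π τ_PiV, u⁰ c_Π τ_PiV, ±ζ)ᵀ`, `u⁰ = √(1+u²)`, one has
`r_± · ∇_ψ λ_± = (u⁰ ± u c_PiV)⁻² [τ_Π c_Π (1 - c_Π²) + τ_Π ρ_Π ∂c_Π/∂ε + ζ ∂c_Π/∂PiV]`. -/
theorem bulk_genuine_nonlinearity_coefficient
    (ε u PiV P rhoPi ζ tauPi : ℝ) (cPi : ℝ → ℝ → ℝ)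
    (hρ : rhoPi = ε + P + PiV)
    (hcdiff : DifferentiableAt ℝ (fun p : ℝ × ℝ => cPi p.1 p.2) (ε, PiV)) :
    (fderiv ℝ
        (fun ψ : Fin 3 → ℝ =>
          (ψ 1 + Real.sqrt (1 + (ψ 1) ^ 2) * cPi (ψ 0) (ψ 2)) /
            (Real.sqrt (1 + (ψ 1) ^ 2) + ψ 1 * cPi (ψ 0) (ψ 2)))
        ![ε, u, PiV]
        ![rhoPi * tauPi, Real.sqrt (1 + u ^ 2) * cPi ε PiV * tauPi, ζ] =
      (1 / (Real.sqrt (1 + u ^ 2) + u * cPi ε PiV) ^ 2) *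
        (tauPi * cPi ε PiV * (1 - (cPi ε PiV) ^ 2) +
          tauPi * rhoPi * deriv (fun e => cPi e PiV) ε +
          ζ * deriv (fun p => cPi ε p) PiV)) ∧
    (fderiv ℝ
        (fun ψ : Fin 3 → ℝ =>
          (ψ 1 - Real.sqrt (1 + (ψ 1) ^ 2) * cPi (ψ 0) (ψ 2)) /
            (Real.sqrt (1 + (ψ 1) ^ 2) - ψ 1 * cPi (ψ 0) (ψ 2)))
        ![ε, u, PiV]
        ![-(rhoPi * tauPi), Real.sqrt (1 + u ^ 2) * cPi ε PiV * tauPi, -ζ] =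
      (1 / (Real.sqrt (1 + u ^ 2) - u * cPi ε PiV) ^ 2) *
        (tauPi * cPi ε PiV * (1 - (cPi ε PiV) ^ 2) +
          tauPi * rhoPi * deriv (fun e => cPi e PiV) ε +
          ζ * deriv (fun p => cPi ε p) PiV)) :=
  bulk_genuine_nonlinearity_coefficient_general ε u PiV rhoPi ζ tauPi cPi hcdiff
end

section
/- Assume c_Π* ∈ (0,1), ε + P > 0, τ_Π* > 0. At the reference state ψ* = (ε, u, 0), the mode λ_± is genuinely nonlinear (r_±* · ∇_ψ λ_±(ψ*) ≠ 0) if and only if (ε + P) ∂c_Π*/∂ε + c_Π*(1 - c_Π*²) + (ζ*/τ_Π*) ∂c_Π/∂Π ≠ 0; in particular, if ∂c_Π/∂Π vanishes at ψ*, genuine nonlinearity is equivalent to (ε+P)∂c_Π*/∂ε + c_Π*(1 - c_Π*²) ≠ 0. -/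
/-! Since `|c_Π| < 1` and `u⁰ = √(1 + u²) > |u|`, both factors `u⁰ ± u c_Π` are positive, so
`r_± · ∇λ_±` vanishes exactly when its bracket does; the bracket is `τ_Π` times the criterion. -/

lemma abs_mul_lt_sqrt_one_add_sq (u : ℝ) {c : ℝ} (hc : |c| ≤ 1) : |u * c| < √(1 + u ^ 2) :=
  calc |u * c| = |u| * |c| := abs_mul u c
    _ ≤ |u| := mul_le_of_le_one_right (abs_nonneg u) hc
    _ = √(u ^ 2) := (Real.sqrt_sq_eq_abs u).symm
    _ < √(1 + u ^ 2) := Real.sqrt_lt_sqrt (sq_nonneg u) (by linarith)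

lemma genuineNonlinearity_bracket_ne_zero_iff {τ ρ ζ c cE cP : ℝ} (hτ : τ ≠ 0) :
    τ * c * (1 - c ^ 2) + τ * ρ * cE + ζ * cP ≠ 0 ↔ ρ * cE + c * (1 - c ^ 2) + ζ / τ * cP ≠ 0 := by
  have hfactor : τ * c * (1 - c ^ 2) + τ * ρ * cE + ζ * cP
      = τ * (ρ * cE + c * (1 - c ^ 2) + ζ / τ * cP) := by
    field_simp
    ring
  rw [hfactor]
  exact mul_ne_zero_iff_left hτ

theorem bulk_genuine_nonlinearity_criterion_general (ε P u ζ tauPi c cE cP Dp Dm : ℝ)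
    (hc0 : 0 < c) (hc1 : c < 1) (hτ : 0 < tauPi)
    (hDp : Dp = ((Real.sqrt (1 + u ^ 2) + u * c) ^ 2)⁻¹ *
      (tauPi * c * (1 - c ^ 2) + tauPi * (ε + P) * cE + ζ * cP))
    (hDm : Dm = ((Real.sqrt (1 + u ^ 2) - u * c) ^ 2)⁻¹ *
      (tauPi * c * (1 - c ^ 2) + tauPi * (ε + P) * cE + ζ * cP)) :
    (Dp ≠ 0 ↔ (ε + P) * cE + c * (1 - c ^ 2) + (ζ / tauPi) * cP ≠ 0) ∧
    (Dm ≠ 0 ↔ (ε + P) * cE + c * (1 - c ^ 2) + (ζ / tauPi) * cP ≠ 0) ∧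
    (cP = 0 →
      ((Dp ≠ 0 ↔ (ε + P) * cE + c * (1 - c ^ 2) ≠ 0) ∧
       (Dm ≠ 0 ↔ (ε + P) * cE + c * (1 - c ^ 2) ≠ 0))) := by
  have hc : |c| ≤ 1 := abs_le.mpr ⟨by linarith, hc1.le⟩
  obtain ⟨hlower, hupper⟩ := abs_lt.mp (abs_mul_lt_sqrt_one_add_sq u hc)
  have hplus : Dp ≠ 0 ↔ (ε + P) * cE + c * (1 - c ^ 2) + (ζ / tauPi) * cP ≠ 0 := by
    rw [hDp, mul_ne_zero_iff_left (inv_ne_zero (pow_ne_zero 2 (by linarith))),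
      genuineNonlinearity_bracket_ne_zero_iff hτ.ne']
  have hminus : Dm ≠ 0 ↔ (ε + P) * cE + c * (1 - c ^ 2) + (ζ / tauPi) * cP ≠ 0 := by
    rw [hDm, mul_ne_zero_iff_left (inv_ne_zero (pow_ne_zero 2 (by linarith))),
      genuineNonlinearity_bracket_ne_zero_iff hτ.ne']
  refine ⟨hplus, hminus, fun hcP => ?_⟩
  simpa only [hcP, mul_zero, add_zero] using And.intro hplus hminus

/-- At the reference state `ψ* = (ε, u, 0)` (so `ρ_Π* = ε + P`), the mode `λ_±`
of the bulk-viscous Israel–Stewart system is genuinely nonlinear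
(`r_±* · ∇_ψ λ_±(ψ*) ≠ 0`) iff
`(ε + P) ∂c_Π*/∂ε + c_Π*(1 - c_Π*²) + (ζ*/τ_Π*) ∂c_Π/∂Π ≠ 0`; in particular if
`∂c_Π/∂Π = 0` at `ψ*`, genuine nonlinearity is equivalent to
`(ε+P) ∂c_Π*/∂ε + c_Π*(1 - c_Π*²) ≠ 0`. Here
`r_±·∇λ_± = (u⁰ ± u c)⁻² [τ c (1-c²) + τ ρ ∂c/∂ε + ζ ∂c/∂Π]` with `u⁰ = √(1+u²)`. -/
theorem bulk_genuine_nonlinearity_criterion (ε P u ζ tauPi c cE cP Dp Dm : ℝ)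
    (hc0 : 0 < c) (hc1 : c < 1) (heP : 0 < ε + P) (hτ : 0 < tauPi)
    (hDp : Dp = ((Real.sqrt (1 + u ^ 2) + u * c) ^ 2)⁻¹ *
      (tauPi * c * (1 - c ^ 2) + tauPi * (ε + P) * cE + ζ * cP))
    (hDm : Dm = ((Real.sqrt (1 + u ^ 2) - u * c) ^ 2)⁻¹ *
      (tauPi * c * (1 - c ^ 2) + tauPi * (ε + P) * cE + ζ * cP)) :
    (Dp ≠ 0 ↔ (ε + P) * cE + c * (1 - c ^ 2) + (ζ / tauPi) * cP ≠ 0) ∧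
    (Dm ≠ 0 ↔ (ε + P) * cE + c * (1 - c ^ 2) + (ζ / tauPi) * cP ≠ 0) ∧
    (cP = 0 →
      ((Dp ≠ 0 ↔ (ε + P) * cE + c * (1 - c ^ 2) ≠ 0) ∧
       (Dm ≠ 0 ↔ (ε + P) * cE + c * (1 - c ^ 2) ≠ 0))) :=
  bulk_genuine_nonlinearity_criterion_general ε P u ζ tauPi c cE cP Dp Dm hc0 hc1 hτ hDp hDm
end

section
/- For the diffusion Israel-Stewart system at the reference state q* = 0, the diffusive modes λ₂± = (u ± u⁰c₂*)/(u⁰ ± uc₂*) with eigenvectors r₂±* = (0, ±T, 0, -u⁰nc₂*)ᵀ satisfy r₂±* · ∇_ψ λ₂± = (u⁰ ± uc₂*)^{-2} T ∂c₂*/∂T; hence λ₂± are genuinely nonlinear at ψ* if and only if ∂c₂*/∂T ≠ 0. -/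
/-!
Along `r₂±*` the velocity `u` stays fixed, so `λ₂±` varies only through `c₂`. As a Möbius
map of `c`, `c ↦ (u ± u⁰c)/(u⁰ ± uc)` has derivative `±((u⁰)² - u²)/(u⁰ ± uc)² = ±(u⁰ ± uc)⁻²`,
and since `∂c₂/∂q = 0` at `q = 0`, `c₂` changes along `r₂±*` at the rate `±T ∂c₂*/∂T`. The
product is `(u⁰ ± uc₂*)⁻² T ∂c₂*/∂T`, whose first two factors do not vanish because
`|uc₂*| ≤ |u| < u⁰`.
-/

open Real

theorem hasDerivAt_div_affine {a b d e x : ℝ} (h : d + e * x ≠ 0) :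
    HasDerivAt (fun y => (a + b * y) / (d + e * y)) ((b * d - a * e) / (d + e * x) ^ 2) x := by
  have hnum : HasDerivAt (fun y => a + b * y) b x := by
    simpa using ((hasDerivAt_id x).const_mul b).const_add a
  have hden : HasDerivAt (fun y => d + e * y) e x := by
    simpa using ((hasDerivAt_id x).const_mul e).const_add d
  exact (hnum.div hden h).congr_deriv (by ring)

theorem hasDerivAt_comp_line_of_deriv_eq_zero {f : ℝ → ℝ → ℝ → ℝ} {x y z : ℝ}
    (hf : DifferentiableAt ℝ (fun p : ℝ × ℝ × ℝ => f p.1 p.2.1 p.2.2) (x, y, z))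
    (hz : deriv (f x y) z = 0) (a b : ℝ) :
    HasDerivAt (fun t => f x (y + t * a) (z + t * b)) (a * deriv (fun y' => f x y' z) y) 0 := by
  set L := fderiv ℝ (fun p : ℝ × ℝ × ℝ => f p.1 p.2.1 p.2.2) (x, y, z)
  have hL : HasFDerivAt _ L (x, y, z) := hf.hasFDerivAt
  have hy : HasDerivAt (fun y' => f x y' z) (L (0, 1, 0)) y := by
    exact hL.comp_hasDerivAt y
      ((hasDerivAt_const y x).prodMk ((hasDerivAt_id y).prodMk (hasDerivAt_const y z)))
  have hz_L : HasDerivAt (f x y) (L (0, 0, 1)) z := by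
    exact hL.comp_hasDerivAt z
      ((hasDerivAt_const z x).prodMk ((hasDerivAt_const z y).prodMk (hasDerivAt_id z)))
  have hsplit : L (0, a, b) = a * L (0, 1, 0) + b * L (0, 0, 1) := by
    rw [← smul_eq_mul, ← smul_eq_mul, ← map_smul, ← map_smul, ← map_add]
    simp
  have hline : HasDerivAt (fun t => f x (y + t * a) (z + t * b)) (L (0, a, b)) 0 := by
    simpa [HasLineDerivAt, mul_comm] using hL.hasLineDerivAt (0, a, b)
  rw [hz_L.deriv] at hz
  rw [hy.deriv]
  exact hline.congr_deriv (by rw [hsplit, hz, mul_zero, add_zero])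

/-- `λ₂+` for `σ = 1` and `λ₂-` for `σ = -1`. -/
noncomputable def diffusiveSpeed (σ u c : ℝ) : ℝ :=
  (u + σ * (√(1 + u ^ 2) * c)) / (√(1 + u ^ 2) + σ * (u * c))

theorem hasDerivAt_diffusiveSpeed {σ u c : ℝ} (h : √(1 + u ^ 2) + σ * (u * c) ≠ 0) :
    HasDerivAt (diffusiveSpeed σ u) (σ / (√(1 + u ^ 2) + σ * (u * c)) ^ 2) c := by
  have hs : √(1 + u ^ 2) * √(1 + u ^ 2) = 1 + u ^ 2 := mul_self_sqrt (by positivity)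
  have key := hasDerivAt_div_affine (a := u) (b := σ * √(1 + u ^ 2)) (d := √(1 + u ^ 2))
    (e := σ * u) (x := c) (by rwa [mul_assoc])
  simp only [mul_assoc] at key
  unfold diffusiveSpeed
  refine key.congr_deriv ?_
  rw [hs]
  ring

theorem differentiableAt_diffusiveSpeed {σ u c : ℝ} (h : √(1 + u ^ 2) + σ * (u * c) ≠ 0) :
    DifferentiableAt ℝ (fun x : ℝ × ℝ => diffusiveSpeed σ x.1 x.2) (u, c) := by
  have hu : 1 + u ^ 2 ≠ 0 := by positivity
  unfold diffusiveSpeed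
  fun_prop (disch := assumption)

theorem fderiv_diffusiveSpeed_comp {c₂ : ℝ → ℝ → ℝ → ℝ} {ε T u q : ℝ} (σ a b : ℝ)
    (hden : √(1 + u ^ 2) + σ * (u * c₂ ε T q) ≠ 0)
    (hc : DifferentiableAt ℝ (fun p : ℝ × ℝ × ℝ => c₂ p.1 p.2.1 p.2.2) (ε, T, q))
    (hq : deriv (c₂ ε T) q = 0) :
    fderiv ℝ (fun ψ : Fin 4 → ℝ => diffusiveSpeed σ (ψ 2) (c₂ (ψ 0) (ψ 1) (ψ 3)))
        ![ε, T, u, q] ![0, a, 0, b] =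
      σ / (√(1 + u ^ 2) + σ * (u * c₂ ε T q)) ^ 2 * (a * deriv (fun T' => c₂ ε T' q) T) := by
  have hF : DifferentiableAt ℝ
      (fun ψ : Fin 4 → ℝ => diffusiveSpeed σ (ψ 2) (c₂ (ψ 0) (ψ 1) (ψ 3))) ![ε, T, u, q] := by
    have hC : DifferentiableAt ℝ (fun ψ : Fin 4 → ℝ => c₂ (ψ 0) (ψ 1) (ψ 3)) ![ε, T, u, q] :=
      hc.comp (g := fun p : ℝ × ℝ × ℝ => c₂ p.1 p.2.1 p.2.2)
        (f := fun ψ : Fin 4 → ℝ => (ψ 0, ψ 1, ψ 3)) _ (by fun_prop)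
    exact (differentiableAt_diffusiveSpeed hden).comp
      (f := fun ψ : Fin 4 → ℝ => (ψ 2, c₂ (ψ 0) (ψ 1) (ψ 3))) ![ε, T, u, q]
      ((differentiableAt_apply (2 : Fin 4) _).prodMk hC)
  have hline : HasLineDerivAt ℝ
      (fun ψ : Fin 4 → ℝ => diffusiveSpeed σ (ψ 2) (c₂ (ψ 0) (ψ 1) (ψ 3)))
      (σ / (√(1 + u ^ 2) + σ * (u * c₂ ε T q)) ^ 2 * (a * deriv (fun T' => c₂ ε T' q) T))
      ![ε, T, u, q] ![0, a, 0, b] := by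
    have := (hasDerivAt_diffusiveSpeed hden).comp_of_eq 0
      (hasDerivAt_comp_line_of_deriv_eq_zero hc hq a b) (by simp)
    simpa [HasLineDerivAt, Function.comp_def] using this
  exact (hF.hasFDerivAt.hasLineDerivAt _).unique hline

theorem sqrt_one_add_sq_add_mul_pos {u c : ℝ} (hc : |c| ≤ 1) : 0 < √(1 + u ^ 2) + u * c := by
  have hu : |u| < √(1 + u ^ 2) := (lt_sqrt (abs_nonneg u)).2 (by rw [sq_abs]; linarith)
  have huc : |u * c| ≤ |u| := by
    rw [abs_mul]
    exact mul_le_of_le_one_right (abs_nonneg u) hc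
  linarith [neg_abs_le (u * c)]

/-- Diffusive modes of the Israel–Stewart diffusion system at the reference
state `q* = 0`: with `ψ = (ε, T, u, q)`, `λ₂± = (u ± u⁰c₂)/(u⁰ ± uc₂)`,
`u⁰ = √(1+u²)`, `c₂* = c₂(ε,T,0)`, and eigenvectors
`r₂±* = (0, ±T, 0, -u⁰nc₂*)ᵀ`, one has
`r₂±* · ∇_ψ λ₂± = (u⁰ ± uc₂*)⁻² T ∂c₂*/∂T`; hence `λ₂±` are genuinely
nonlinear at `ψ*` iff `∂c₂*/∂T ≠ 0`. -/
theorem diffusion_modes_genuine_nonlinearity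
    (ε T u n : ℝ) (c₂ : ℝ → ℝ → ℝ → ℝ)
    (hT : 0 < T) (hc0 : 0 < c₂ ε T 0) (hc1 : c₂ ε T 0 < 1)
    (hcdiff : DifferentiableAt ℝ
      (fun p : ℝ × ℝ × ℝ => c₂ p.1 p.2.1 p.2.2) (ε, T, 0))
    (hcq : deriv (fun q => c₂ ε T q) 0 = 0) :
    (fderiv ℝ
        (fun ψ : Fin 4 → ℝ =>
          (ψ 2 + Real.sqrt (1 + (ψ 2) ^ 2) * c₂ (ψ 0) (ψ 1) (ψ 3)) /
            (Real.sqrt (1 + (ψ 2) ^ 2) + ψ 2 * c₂ (ψ 0) (ψ 1) (ψ 3)))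
        ![ε, T, u, 0]
        ![0, T, 0, -(Real.sqrt (1 + u ^ 2) * n * c₂ ε T 0)] =
      ((Real.sqrt (1 + u ^ 2) + u * c₂ ε T 0) ^ 2)⁻¹ * T *
        deriv (fun T' => c₂ ε T' 0) T) ∧
    (fderiv ℝ
        (fun ψ : Fin 4 → ℝ =>
          (ψ 2 - Real.sqrt (1 + (ψ 2) ^ 2) * c₂ (ψ 0) (ψ 1) (ψ 3)) /
            (Real.sqrt (1 + (ψ 2) ^ 2) - ψ 2 * c₂ (ψ 0) (ψ 1) (ψ 3)))
        ![ε, T, u, 0]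
        ![0, -T, 0, -(Real.sqrt (1 + u ^ 2) * n * c₂ ε T 0)] =
      ((Real.sqrt (1 + u ^ 2) - u * c₂ ε T 0) ^ 2)⁻¹ * T *
        deriv (fun T' => c₂ ε T' 0) T) ∧
    (((Real.sqrt (1 + u ^ 2) + u * c₂ ε T 0) ^ 2)⁻¹ * T *
        deriv (fun T' => c₂ ε T' 0) T ≠ 0 ↔
      deriv (fun T' => c₂ ε T' 0) T ≠ 0) ∧
    (((Real.sqrt (1 + u ^ 2) - u * c₂ ε T 0) ^ 2)⁻¹ * T *
        deriv (fun T' => c₂ ε T' 0) T ≠ 0 ↔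
      deriv (fun T' => c₂ ε T' 0) T ≠ 0) := by
  have hc : |c₂ ε T 0| ≤ 1 := abs_le.2 ⟨by linarith, hc1.le⟩
  have hplus_pos : 0 < √(1 + u ^ 2) + u * c₂ ε T 0 := sqrt_one_add_sq_add_mul_pos hc
  have hminus_pos : 0 < √(1 + u ^ 2) - u * c₂ ε T 0 := by
    simpa [sub_eq_add_neg] using sqrt_one_add_sq_add_mul_pos (u := u) (c := -c₂ ε T 0)
      (by rwa [abs_neg])
  have hplus := fderiv_diffusiveSpeed_comp 1 T (-(√(1 + u ^ 2) * n * c₂ ε T 0))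
    (by simpa using hplus_pos.ne') hcdiff hcq
  have hminus := fderiv_diffusiveSpeed_comp (-1) (-T) (-(√(1 + u ^ 2) * n * c₂ ε T 0))
    (by simpa [← sub_eq_add_neg] using hminus_pos.ne') hcdiff hcq
  simp only [diffusiveSpeed, one_mul, neg_one_mul, ← sub_eq_add_neg] at hplus hminus
  refine ⟨by rw [hplus]; ring, by rw [hminus]; ring, ?_, ?_⟩
  · exact mul_ne_zero_iff_left (mul_ne_zero (inv_ne_zero (pow_ne_zero 2 hplus_pos.ne')) hT.ne')
  · exact mul_ne_zero_iff_left (mul_ne_zero (inv_ne_zero (pow_ne_zero 2 hminus_pos.ne')) hT.ne')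
end
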